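/- arXiv:1906.02922 — 5 statements merged into one kernel-verified Lean document; each statement's English description precedes it below -/
import Mathlib

section
/- Let $z_1,\dots,z_n$ be nonnegative reals. Then $\sum_{k=1}^{n} \frac{z_k}{\sqrt{\max\{1, \sum_{j=1}^{k-1} z_j\}}} \le (\sqrt{2}+1)\sqrt{\max\{1, \sum_{k=1}^{n} z_k\}}$, provided $z_k \le \sum_{j=1}^{k-1} z_j$ for each $k \ge 2$ and $z_1 \le 1$. -/
/-!
The sum is bounded through the potential `Φ S = S + √2` for `S ≤ 1` and `Φ S = (√2 + 1) √S`
for `S > 1`: adding an increment `w ≤ max 1 S` raises `Φ` by at least `w / √(max 1 S)`, and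
`Φ S ≤ (√2 + 1) √(max 1 S)`. Above 1 this is the paper's inequality
`(√2 + 1) √S + w / √S ≤ (√2 + 1) √(S + w)` for `w ≤ S`; the linear branch below 1 absorbs the
steps where the running total is still smaller than 1.
-/

open Finset Real

noncomputable def incrementPotential (S : ℝ) : ℝ :=
  if S ≤ 1 then S + √2 else (√2 + 1) * √S

/-- With `a = √S`, `b = √(S + w)` the increment is `w = (b - a)(b + a)`, and `b ≤ √2 a`. -/
lemma mul_sqrt_add_div_sqrt_le {S w : ℝ} (hS : 0 < S) (hw : 0 ≤ w) (hwS : w ≤ S) :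
    (√2 + 1) * √S + w / √S ≤ (√2 + 1) * √(S + w) := by
  set a := √S with ha
  set b := √(S + w) with hb
  have ha_pos : 0 < a := sqrt_pos.mpr hS
  have ha_sq : a ^ 2 = S := sq_sqrt hS.le
  have hb_sq : b ^ 2 = S + w := sq_sqrt (by linarith)
  have hab : a ≤ b := sqrt_le_sqrt (by linarith)
  have hb_le : b ≤ √2 * a := by
    rw [ha, hb, ← sqrt_mul zero_le_two]
    exact sqrt_le_sqrt (by linarith)
  have hw_div : w / a * a = w := div_mul_cancel₀ w ha_pos.ne'
  rw [← mul_le_mul_iff_of_pos_right ha_pos]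
  nlinarith [mul_nonneg (sub_nonneg.mpr hab) (sub_nonneg.mpr hb_le)]

lemma add_sqrt_two_le_mul_sqrt {t : ℝ} (h1 : 1 ≤ t) (h2 : t ≤ 2) :
    t + √2 ≤ (√2 + 1) * √t := by
  have hu1 : 1 ≤ √t := one_le_sqrt.mpr h1
  have hu2 : √t ≤ √2 := sqrt_le_sqrt h2
  have hu_sq : √t ^ 2 = t := sq_sqrt (by linarith)
  nlinarith [mul_nonneg (sub_nonneg.mpr hu1) (sub_nonneg.mpr hu2)]

lemma incrementPotential_add_div_le {S w : ℝ} (hw : 0 ≤ w) (hwS : w ≤ max 1 S) :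
    incrementPotential S + w / √(max 1 S) ≤ incrementPotential (S + w) := by
  unfold incrementPotential
  rcases le_or_gt S 1 with hS1 | hS1
  · rw [max_eq_left hS1] at hwS ⊢
    rw [sqrt_one, div_one, if_pos hS1]
    split_ifs with hSw
    · linarith
    · linarith [add_sqrt_two_le_mul_sqrt (not_le.mp hSw).le (by linarith : S + w ≤ 2)]
  · rw [max_eq_right hS1.le] at hwS ⊢
    rw [if_neg (not_le.mpr hS1), if_neg (by linarith)]
    exact mul_sqrt_add_div_sqrt_le (by linarith) hw hwS

lemma incrementPotential_le (S : ℝ) :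
    incrementPotential S ≤ (√2 + 1) * √(max 1 S) := by
  unfold incrementPotential
  rcases le_or_gt S 1 with hS1 | hS1
  · rw [if_pos hS1, max_eq_left hS1, sqrt_one]
    linarith
  · rw [if_neg (not_le.mpr hS1), max_eq_right hS1.le]

lemma sum_div_sqrt_le_incrementPotential (n : ℕ) (z : ℕ → ℝ) (hz : ∀ k, 0 ≤ z k)
    (hinc : ∀ k ∈ Icc 1 n, z k ≤ max 1 (∑ j ∈ Icc 1 (k - 1), z j)) :
    ∑ k ∈ Icc 1 n, z k / √(max 1 (∑ j ∈ Icc 1 (k - 1), z j)) ≤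
      incrementPotential (∑ k ∈ Icc 1 n, z k) := by
  induction n with
  | zero => simp [incrementPotential]
  | succ m ih =>
    have hinc_m : ∀ k ∈ Icc 1 m, z k ≤ max 1 (∑ j ∈ Icc 1 (k - 1), z j) := fun k hk =>
      hinc k (Icc_subset_Icc_right m.le_succ hk)
    have hlast := hinc (m + 1) (right_mem_Icc.mpr m.succ_pos)
    rw [Nat.add_sub_cancel] at hlast
    rw [sum_Icc_succ_top (Nat.le_add_left 1 m), sum_Icc_succ_top (Nat.le_add_left 1 m),
      Nat.add_sub_cancel]
    calc _ ≤ incrementPotential (∑ k ∈ Icc 1 m, z k) +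
            z (m + 1) / √(max 1 (∑ j ∈ Icc 1 m, z j)) := by
          gcongr
          exact ih hinc_m
      _ ≤ _ := incrementPotential_add_div_le (hz _) hlast

/-- Lemma 19 of Jaksch–Ortner–Auer (2010): sum of increments normalized by the square
root of the running total is bounded by `(√2 + 1)` times the square root of the final total. -/
theorem normalized_increment_sum_bound
    (n : ℕ) (z : ℕ → ℝ) (hz : ∀ k, 0 ≤ z k)
    (h1 : z 1 ≤ 1)
    (hsum : ∀ k, 2 ≤ k → k ≤ n → z k ≤ ∑ j ∈ Finset.Icc 1 (k - 1), z j) :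
    ∑ k ∈ Finset.Icc 1 n, z k / Real.sqrt (max 1 (∑ j ∈ Finset.Icc 1 (k - 1), z j)) ≤
      (Real.sqrt 2 + 1) * Real.sqrt (max 1 (∑ k ∈ Finset.Icc 1 n, z k)) := by
  have hinc : ∀ k ∈ Icc 1 n, z k ≤ max 1 (∑ j ∈ Icc 1 (k - 1), z j) := by
    intro k hk
    obtain ⟨hk1, hkn⟩ := mem_Icc.mp hk
    rcases hk1.eq_or_lt with rfl | hk2
    · exact le_max_of_le_left h1
    · exact le_max_of_le_right (hsum k hk2 hkn)
  exact (sum_div_sqrt_le_incrementPotential n z hz hinc).trans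
    (incrementPotential_le _)
end

section
/- Let $(\rho, \gamma)$ with $\gamma : \mathcal{S} \to \mathbb{R}$ satisfy, for all states $s$ and actions $a \in \mathcal{A}_s$: $\rho + \gamma(s) \ge r(s,a) + \sum_{s'} p(s' \mid s, a)\gamma(s')$, where $r(s,a) \in [0,1]$. Suppose the MDP $(\mathcal{S}, \mathcal{A}, p)$ is communicating with diameter $D$, i.e., for any two states $s, s'$ there is a stationary policy under which the expected hitting time from $s$ to $s'$ is at most $D$. Then $\max_{s,s'} (\gamma(s) - \gamma(s')) \le 2D$ (assuming $\rho \le 1$, which holds when $\rho$ is at most the maximal reward). -/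
/-!
Fix the target state `s` and a policy `π` whose expected hitting time `h` of `s` satisfies
`h s' ≤ D`. Feasibility with `r ≥ 0` and `ρ ≤ 1` gives `P γ ≤ γ + 1` for the chain `P` of `π`,
while `P h = h - 1` away from `s`; hence `f = γ s - γ - h` is subharmonic away from `s` and
vanishes at `s`. A maximum principle, with `h + 1` as a strictly decreasing Lyapunov function,
shows `f ≤ 0`, i.e. `γ s - γ s' ≤ h s' ≤ D ≤ 2D`.
-/

open Finset

section MaximumPrinciple

variable {S : Type*} [Fintype S]

/-- Maximum principle: consider the point where `f / w` is largest. -/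
theorem nonpos_of_subharmonic_of_lyapunov (P : S → S → ℝ) (hP : ∀ u v, 0 ≤ P u v)
    (w f : S → ℝ) (hw : ∀ u, 0 < w u)
    (hsub : ∀ u, 0 < f u → f u ≤ ∑ v, P u v * f v)
    (hdrift : ∀ u, 0 < f u → ∑ v, P u v * w v < w u) (u : S) :
    f u ≤ 0 := by
  have : Nonempty S := ⟨u⟩
  obtain ⟨x, hx⟩ := Finite.exists_max fun v => f v / w v
  set c := f x / w x
  have hfc : ∀ v, f v ≤ c * w v := fun v => (div_le_iff₀ (hw v)).1 (hx v)
  suffices c ≤ 0 from (hfc u).trans (mul_nonpos_of_nonpos_of_nonneg this (hw u).le)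
  by_contra! hc
  have hfx : f x = c * w x := (div_mul_cancel₀ (f x) (hw x).ne').symm
  have hfx_pos : 0 < f x := hfx ▸ mul_pos hc (hw x)
  have : c * w x ≤ c * ∑ v, P x v * w v :=
    calc c * w x = f x := hfx.symm
      _ ≤ ∑ v, P x v * f v := hsub x hfx_pos
      _ ≤ ∑ v, P x v * (c * w v) :=
        sum_le_sum fun v _ => mul_le_mul_of_nonneg_left (hfc v) (hP x v)
      _ = c * ∑ v, P x v * w v := by
        rw [mul_sum]
        exact sum_congr rfl fun v _ => by ring
  exact (mul_lt_mul_of_pos_left (hdrift x hfx_pos) hc).not_ge this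

structure IsHittingTime (P : S → S → ℝ) (t : S) (h : S → ℝ) : Prop where
  nonneg : ∀ u, 0 ≤ h u
  eq_zero : h t = 0
  eq_one_add : ∀ u, u ≠ t → h u = 1 + ∑ v, P u v * h v

theorem IsHittingTime.sub_le {P : S → S → ℝ} {t : S} {h : S → ℝ} (hh : IsHittingTime P t h)
    (hP : ∀ u v, 0 ≤ P u v) (hPsum : ∀ u, ∑ v, P u v = 1) {γ : S → ℝ}
    (hγ : ∀ u, ∑ v, P u v * γ v ≤ γ u + 1) (u : S) :
    γ t - γ u ≤ h u := by
  have hne : ∀ u, 0 < γ t - γ u - h u → u ≠ t := by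
    rintro u hpos rfl
    simp [hh.eq_zero] at hpos
  have hsub : ∀ u, 0 < γ t - γ u - h u →
      γ t - γ u - h u ≤ ∑ v, P u v * (γ t - γ v - h v) := by
    intro u hpos
    have hsplit : ∑ v, P u v * (γ t - γ v - h v)
        = γ t - ∑ v, P u v * γ v - ∑ v, P u v * h v := by
      simp only [mul_sub, sum_sub_distrib, ← sum_mul, hPsum, one_mul]
    linarith [hh.eq_one_add u (hne u hpos), hγ u]
  have hdrift : ∀ u, 0 < γ t - γ u - h u → ∑ v, P u v * (h v + 1) < h u + 1 := by
    intro u hpos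
    simp only [mul_add, sum_add_distrib, mul_one, hPsum]
    linarith [hh.eq_one_add u (hne u hpos)]
  have := nonpos_of_subharmonic_of_lyapunov P hP (fun v => h v + 1) (fun v => γ t - γ v - h v)
    (fun v => by linarith [hh.nonneg v]) hsub hdrift u
  linarith

end MaximumPrinciple

theorem dual_feasible_bias_span_le_general
    {S : Type*} [Fintype S] {A : S → Type*}
    (p : (s : S) → A s → S → ℝ) (r : (s : S) → A s → ℝ)
    (hr : ∀ s a, 0 ≤ r s a ∧ r s a ≤ 1)
    (hpnn : ∀ s a s', 0 ≤ p s a s') (hpsum : ∀ s a, ∑ s', p s a s' = 1)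
    (D : ℝ)
    (hdiam : ∀ s s' : S, ∃ π : (u : S) → A u, ∃ h : S → ℝ,
      (∀ u, 0 ≤ h u) ∧ h s' = 0 ∧
        (∀ u, u ≠ s' → h u = 1 + ∑ v, p u (π u) v * h v) ∧ h s ≤ D)
    (ρ : ℝ) (γ : S → ℝ) (hρ : ρ ≤ 1)
    (hfeas : ∀ s a, r s a + ∑ s', p s a s' * γ s' ≤ ρ + γ s) :
    ∀ s s', γ s - γ s' ≤ 2 * D := by
  intro s s'
  obtain ⟨π, h, hh_nonneg, hh_zero, hh_bellman, hhD⟩ := hdiam s' s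
  have hγ : ∀ u, ∑ v, p u (π u) v * γ v ≤ γ u + 1 := fun u => by
    linarith [hfeas u (π u), (hr u (π u)).1]
  have hspan := IsHittingTime.sub_le ⟨hh_nonneg, hh_zero, hh_bellman⟩
    (fun u => hpnn u (π u)) (fun u => hpsum u (π u)) hγ s'
  linarith [hh_nonneg s']

/-- Lemma `mc` (Jaksch et al. 2010): any feasible solution of the dual LP for an
average-reward communicating MDP with diameter `D` has bias span at most `2D`. The
diameter hypothesis is encoded via bounded nonnegative solutions of the hitting-time
Bellman equations. -/
theorem dual_feasible_bias_span_le
    {S : Type*} [Fintype S] {A : S → Type*} [∀ s, Fintype (A s)]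
    (p : (s : S) → A s → S → ℝ) (r : (s : S) → A s → ℝ)
    (hr : ∀ s a, 0 ≤ r s a ∧ r s a ≤ 1)
    (hpnn : ∀ s a s', 0 ≤ p s a s') (hpsum : ∀ s a, ∑ s', p s a s' = 1)
    (D : ℝ) (hD : 0 ≤ D)
    (hdiam : ∀ s s' : S, ∃ π : (u : S) → A u, ∃ h : S → ℝ,
      (∀ u, 0 ≤ h u) ∧ h s' = 0 ∧
        (∀ u, u ≠ s' → h u = 1 + ∑ v, p u (π u) v * h v) ∧ h s ≤ D)
    (ρ : ℝ) (γ : S → ℝ) (hρ : ρ ≤ 1)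
    (hfeas : ∀ s a, r s a + ∑ s', p s a s' * γ s' ≤ ρ + γ s) :
    ∀ s s', γ s - γ s' ≤ 2 * D :=
  dual_feasible_bias_span_le_general p r hr hpnn hpsum D hdiam ρ γ hρ hfeas
end

section
/- There exist a 2-state, 2-actions-per-state deterministic MDP sequence $p_1, \dots, p_W$ (with $W = 4\tau$ for a positive integer $\tau$) in which each individual MDP has diameter 1 and the total $\ell_1$ variation $\sum_{t=1}^{W-1}\max_{s,a}\|p_{t+1}(\cdot|s,a)-p_t(\cdot|s,a)\|_1$ is at most $6$, yet there is a deterministic trajectory $(s_1,a_1),\dots,(s_W,a_W)$ such that the empirical transition kernel $\hat p(s'|s,a) = \frac{\#\{q : (s_q,a_q,s_{q+1})=(s,a,s')\}}{\max(1, \#\{q : (s_q,a_q)=(s,a)\})}$ defines an MDP of diameter exactly $\tau + 1$. -/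
open Finset
open scoped ENNReal

/-- Probability that a chain started at `s`, driven by the stochastic matrix `P`, avoids
the target state `tgt` during its first `n` steps. -/
noncomputable def surv (P : Fin 2 → Fin 2 → ℝ) (tgt : Fin 2) : ℕ → Fin 2 → ℝ
  | 0, _ => 1
  | n + 1, s => ∑ u, (if u = tgt then 0 else P s u * surv P tgt n u)

/-- Expected hitting time (in `ℝ≥0∞`) of `tgt` from `s` under the stochastic matrix `P`,
as the sum of the survival probabilities. -/
noncomputable def hitExp (P : Fin 2 → Fin 2 → ℝ) (tgt s : Fin 2) : ℝ≥0∞ :=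
  ∑' n : ℕ, ENNReal.ofReal (surv P tgt n s)

/-- Diameter of a (sub)stochastic kernel: maximum over ordered state pairs of the minimum
over stationary policies of the expected hitting time. -/
noncomputable def diam (p : Fin 2 → Fin 2 → Fin 2 → ℝ) : ℝ≥0∞ :=
  ⨆ s : Fin 2, ⨆ s' : Fin 2, ⨅ π : Fin 2 → Fin 2,
    hitExp (fun u v => p u (π u) v) s' s

/-- Empirical transition kernel computed from the trajectory `(s_q, a_q)_{q=1}^W`. -/
noncomputable def empK (W : ℕ) (s : ℕ → Fin 2) (a : ℕ → Fin 2)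
    (u : Fin 2) (b : Fin 2) (v : Fin 2) : ℝ :=
  (((Finset.Icc 1 W).filter (fun q => s q = u ∧ a q = b ∧ s (q + 1) = v)).card : ℝ) /
    ((max 1 ((Finset.Icc 1 W).filter (fun q => s q = u ∧ a q = b)).card : ℕ) : ℝ)

/-!
The kernels are the paper's $p^1$ up to time `τ` and $p^2$ afterwards, so they switch once
and the total variation is `2`; in each of them every state reaches every state in one step,
so each has diameter `1`. The trajectory stays in state `0`, using the self-loop of the current
kernel, except at the very last step, where action `0` under $p^2$ leads to state `1`. Thus
action `0` at state `0` is seen `τ + 1` times and leaves `0` only once: under it the empirical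
chain needs a geometric number of steps, of mean `τ + 1`, to reach `1`, while under action `1`
it never leaves. The unvisited state `1` has empty empirical rows, so from it every target
counts as reached after one step.
-/

lemma one_le_hitExp (P : Fin 2 → Fin 2 → ℝ) (tgt s : Fin 2) : 1 ≤ hitExp P tgt s := by
  simpa [hitExp, surv] using ENNReal.le_tsum (f := fun n => ENNReal.ofReal (surv P tgt n s)) 0

lemma hitExp_eq_one_of_forall_ne {P : Fin 2 → Fin 2 → ℝ} {tgt s : Fin 2}
    (h : ∀ u, u ≠ tgt → P s u = 0) : hitExp P tgt s = 1 := by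
  have hstop : ∀ n, surv P tgt (n + 1) s = 0 := fun n =>
    Finset.sum_eq_zero fun u _ => by by_cases hu : u = tgt <;> simp [hu, h]
  rw [hitExp, tsum_eq_single 0 fun n hn => ?_]
  · simp [surv]
  · obtain ⟨m, rfl⟩ := Nat.exists_eq_succ_of_ne_zero hn
    simp [hstop]

lemma surv_one_zero (P : Fin 2 → Fin 2 → ℝ) (n : ℕ) : surv P 1 n 0 = P 0 0 ^ n := by
  induction n with
  | zero => simp [surv]
  | succ n ih => simp [surv, Fin.sum_univ_two, ih, pow_succ, mul_comm]

lemma hitExp_one_zero {P : Fin 2 → Fin 2 → ℝ} (h : 0 ≤ P 0 0) :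
    hitExp P 1 0 = (1 - ENNReal.ofReal (P 0 0))⁻¹ := by
  simp only [hitExp, surv_one_zero, ENNReal.ofReal_pow h, ENNReal.tsum_geometric]

lemma hitExp_one_zero_of_eq_div {P : Fin 2 → Fin 2 → ℝ} {τ : ℕ} (h : P 0 0 = τ / (τ + 1)) :
    hitExp P 1 0 = τ + 1 := by
  have hpos : (0 : ℝ) < τ + 1 := by positivity
  have hescape : 1 - (τ : ℝ) / (τ + 1) = (τ + 1 : ℝ)⁻¹ := by field_simp; ring
  rw [hitExp_one_zero (h ▸ by positivity), h, ← ENNReal.ofReal_one,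
    ← ENNReal.ofReal_sub _ (by positivity), hescape, ENNReal.ofReal_inv_of_pos hpos, inv_inv]
  norm_cast

lemma one_le_diam (p : Fin 2 → Fin 2 → Fin 2 → ℝ) : 1 ≤ diam p :=
  le_iSup₂_of_le (f := fun s s' => ⨅ π : Fin 2 → Fin 2, hitExp (fun u v => p u (π u) v) s' s)
    0 0 (le_iInf fun _ => one_le_hitExp _ _ _)

lemma diam_eq_one_of_forall_exists {p : Fin 2 → Fin 2 → Fin 2 → ℝ}
    (h : ∀ s s', ∃ b, ∀ u, u ≠ s' → p s b u = 0) : diam p = 1 := by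
  refine le_antisymm (iSup₂_le fun s s' => ?_) (one_le_diam p)
  obtain ⟨b, hb⟩ := h s s'
  exact iInf_le_of_le (fun _ => b) (hitExp_eq_one_of_forall_ne (P := fun u v => p u b v) hb).le

/-- `addKernel 0` and `addKernel 1` are the paper's $p^1$ and $p^2$ (action index `0` is
$a_1, b_1$). -/
def addKernel (c : Fin 2) : Fin 2 → Fin 2 → Fin 2 → ℝ :=
  fun u b v => if v = u + b + c then 1 else 0

lemma addKernel_eq_zero_or_eq_one (c u b v : Fin 2) :
    addKernel c u b v = 0 ∨ addKernel c u b v = 1 := by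
  unfold addKernel; split_ifs <;> simp

lemma addKernel_nonneg (c u b v : Fin 2) : 0 ≤ addKernel c u b v := by
  unfold addKernel; split_ifs <;> norm_num

lemma sum_addKernel (c u b : Fin 2) : ∑ v, addKernel c u b v = 1 := by
  simp [addKernel]

lemma diam_addKernel (c : Fin 2) : diam (addKernel c) = 1 :=
  diam_eq_one_of_forall_exists fun s s' =>
    ⟨s' - s - c, fun u hu => if_neg (by rwa [show s + (s' - s - c) + c = s' by abel])⟩

lemma sum_abs_sub_le_two {ι : Type*} [Fintype ι] {f g : ι → ℝ} (hf : ∀ i, 0 ≤ f i)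
    (hg : ∀ i, 0 ≤ g i) (hf1 : ∑ i, f i = 1) (hg1 : ∑ i, g i = 1) :
    ∑ i, |f i - g i| ≤ 2 :=
  calc ∑ i, |f i - g i| ≤ ∑ i, (f i + g i) :=
        Finset.sum_le_sum fun i _ => (abs_sub _ _).trans (by rw [abs_of_nonneg (hf i),
          abs_of_nonneg (hg i)])
    _ = 2 := by rw [Finset.sum_add_distrib, hf1, hg1]; norm_num

lemma sum_variation_le {α β γ : Type*} [Nonempty α] [Nonempty β] [Fintype γ]
    (p : ℕ → α → β → γ → ℝ) (hp : ∀ t u b v, 0 ≤ p t u b v)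
    (hp1 : ∀ t u b, ∑ v, p t u b v = 1) (S I : Finset ℕ) (hS : ∀ t ∉ S, p (t + 1) = p t) :
    ∑ t ∈ I, ⨆ u, ⨆ b, ∑ v, |p (t + 1) u b v - p t u b v| ≤ 2 * #S := by
  set V := fun t => ⨆ u, ⨆ b, ∑ v, |p (t + 1) u b v - p t u b v|
  have hV : ∀ t, V t ≤ 2 := fun t => ciSup_le fun u => ciSup_le fun b =>
    sum_abs_sub_le_two (hp _ u b) (hp _ u b) (hp1 _ u b) (hp1 _ u b)
  have hV0 : ∀ t ∉ S, V t = 0 := fun t ht => by simp [V, hS t ht]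
  calc ∑ t ∈ I, V t = ∑ t ∈ I with t ∈ S, V t :=
        (Finset.sum_filter_of_ne (p := (· ∈ S)) fun t _ h =>
          by_contra fun ht => h (hV0 t ht)).symm
    _ ≤ #{t ∈ I | t ∈ S} • 2 := Finset.sum_le_card_nsmul _ _ _ fun t _ => hV t
    _ ≤ 2 * #S := by
        rw [nsmul_eq_mul, mul_comm]
        gcongr
        exact fun t ht => (Finset.mem_filter.1 ht).2

lemma fin_two_eq_one_iff_ne_zero {x : Fin 2} : x = 1 ↔ x ≠ 0 := by
  fin_cases x <;> simp

lemma empK_eq_zero_of_forall {W : ℕ} {s a : ℕ → Fin 2} {u b v : Fin 2}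
    (h : ∀ q ∈ Icc 1 W, s q = u → a q = b → s (q + 1) ≠ v) : empK W s a u b v = 0 := by
  rw [empK, Finset.filter_eq_empty_iff.2 fun q hq ⟨hu, hb, hv⟩ => h q hq hu hb hv]
  simp

lemma empK_eq_one_of_forall {W : ℕ} {s a : ℕ → Fin 2} {u b v : Fin 2}
    (hvisit : ∃ q ∈ Icc 1 W, s q = u ∧ a q = b)
    (h : ∀ q ∈ Icc 1 W, s q = u → a q = b → s (q + 1) = v) : empK W s a u b v = 1 := by
  have hcard : 0 < #{q ∈ Icc 1 W | s q = u ∧ a q = b} := by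
    obtain ⟨q, hq, hvq⟩ := hvisit
    exact Finset.card_pos.2 ⟨q, Finset.mem_filter.2 ⟨hq, hvq⟩⟩
  rw [empK, Finset.filter_congr fun q hq => and_congr_right fun hu =>
    and_iff_left_of_imp (h q hq hu), max_eq_right hcard]
  exact div_self (by exact_mod_cast hcard.ne')

section Trajectory

variable (τ : ℕ)

def trajState (q : ℕ) : Fin 2 := if q ≤ 4 * τ then 0 else 1

def trajAction (q : ℕ) : Fin 2 := if q ≤ τ ∨ q = 4 * τ then 0 else 1

def kernelSeq (t : ℕ) : Fin 2 → Fin 2 → Fin 2 → ℝ := addKernel (if t ≤ τ then 0 else 1)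

variable {τ}

lemma trajState_eq_zero_iff {q : ℕ} : trajState τ q = 0 ↔ q ≤ 4 * τ := by
  unfold trajState; split_ifs with h <;> simp [h]

lemma trajAction_eq_zero_iff {q : ℕ} : trajAction τ q = 0 ↔ q ≤ τ ∨ q = 4 * τ := by
  unfold trajAction; split_ifs with h <;> simp [h]

lemma kernelSeq_succ {t : ℕ} (ht : t ≠ τ) : kernelSeq τ (t + 1) = kernelSeq τ t := by
  unfold kernelSeq
  congr 1
  split_ifs <;> first | rfl | omega

lemma kernelSeq_trajectory (hτ : 0 < τ) {q : ℕ} (hq : q ≤ 4 * τ) :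
    kernelSeq τ q (trajState τ q) (trajAction τ q) (trajState τ (q + 1)) = 1 := by
  unfold kernelSeq addKernel trajState trajAction
  split_ifs <;> first | rfl | omega

lemma empK_trajectory_stay (hτ : 0 < τ) :
    empK (4 * τ) (trajState τ) (trajAction τ) 0 0 0 = τ / (τ + 1) := by
  have hstay : {q ∈ Icc 1 (4 * τ) | trajState τ q = 0 ∧ trajAction τ q = 0 ∧
      trajState τ (q + 1) = 0} = Icc 1 τ := by
    ext q; simp only [mem_filter, mem_Icc, trajState_eq_zero_iff, trajAction_eq_zero_iff]; omega
  have hvisit : {q ∈ Icc 1 (4 * τ) | trajState τ q = 0 ∧ trajAction τ q = 0} =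
      insert (4 * τ) (Icc 1 τ) := by
    ext q; simp only [mem_filter, mem_Icc, mem_insert, trajState_eq_zero_iff,
      trajAction_eq_zero_iff]; omega
  rw [empK, hstay, hvisit, card_insert_of_notMem (by simp; omega), Nat.card_Icc,
    max_eq_right (by omega)]
  push_cast; ring

lemma empK_trajectory_one_zero (hτ : 0 < τ) :
    empK (4 * τ) (trajState τ) (trajAction τ) 0 1 0 = 1 := by
  refine empK_eq_one_of_forall ⟨4 * τ - 1, ?_⟩ fun q hq _ ha => ?_
  · simp only [mem_Icc, trajState_eq_zero_iff, fin_two_eq_one_iff_ne_zero, ne_eq,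
      trajAction_eq_zero_iff]
    omega
  · simp only [mem_Icc, fin_two_eq_one_iff_ne_zero, ne_eq, trajAction_eq_zero_iff] at hq ha
    rw [trajState_eq_zero_iff]; omega

lemma empK_trajectory_one_one :
    empK (4 * τ) (trajState τ) (trajAction τ) 0 1 1 = 0 :=
  empK_eq_zero_of_forall fun q hq _ ha => by
    simp only [mem_Icc, fin_two_eq_one_iff_ne_zero, ne_eq, trajAction_eq_zero_iff] at hq ha
    simp only [ne_eq, fin_two_eq_one_iff_ne_zero, trajState_eq_zero_iff, not_not]; omega

lemma empK_trajectory_of_one (b v : Fin 2) :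
    empK (4 * τ) (trajState τ) (trajAction τ) 1 b v = 0 :=
  empK_eq_zero_of_forall fun q hq hs _ => by
    simp only [mem_Icc, fin_two_eq_one_iff_ne_zero, ne_eq, trajState_eq_zero_iff] at hq hs; omega

lemma diam_empK_trajectory (hτ : 0 < τ) :
    diam (empK (4 * τ) (trajState τ) (trajAction τ)) = τ + 1 := by
  set p := empK (4 * τ) (trajState τ) (trajAction τ)
  have hgeom : ∀ π : Fin 2 → Fin 2, π 0 = 0 → hitExp (fun u v => p u (π u) v) 1 0 = τ + 1 :=
    fun π h => hitExp_one_zero_of_eq_div (by simp only [h]; exact empK_trajectory_stay hτ)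
  apply le_antisymm
  · refine iSup₂_le fun s s' => ?_
    by_cases hs : s = 0 ∧ s' = 1
    · obtain ⟨rfl, rfl⟩ := hs
      exact iInf_le_of_le (fun _ => 0) (hgeom _ rfl).le
    refine iInf_le_of_le (fun _ => 1)
      ((hitExp_eq_one_of_forall_ne fun u hu => ?_).trans_le le_add_self)
    by_cases hs0 : s = 0
    · obtain rfl : u = 1 := by fin_cases s' <;> fin_cases u <;> simp_all
      rw [hs0]; exact empK_trajectory_one_one
    · rw [Fin.eq_one_of_ne_zero s hs0]; exact empK_trajectory_of_one 1 u
  · refine le_iSup₂_of_le (f := fun s s' => ⨅ π : Fin 2 → Fin 2,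
      hitExp (fun u v => p u (π u) v) s' s) 0 1 (le_iInf fun π => ?_)
    by_cases h : π 0 = 0
    · exact (hgeom π h).ge
    have hstay : p 0 (π 0) 0 = 1 := by
      rw [Fin.eq_one_of_ne_zero _ h]; exact empK_trajectory_one_zero hτ
    rw [hitExp_one_zero (hstay ▸ zero_le_one), hstay]
    simp

end Trajectory

/-- Proposition `peril1` (part 1): there is a sequence of deterministic 2-state, 2-action
MDPs, each of diameter 1 and of total ℓ¹ variation at most 6, together with a trajectory
consistent with the dynamics, such that the empirical MDP has diameter exactly `τ + 1`
(where the horizon is `W = 4τ`). -/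
theorem empirical_mdp_large_diameter (τ : ℕ) (hτ : 0 < τ) :
    ∃ p : ℕ → Fin 2 → Fin 2 → Fin 2 → ℝ, ∃ s : ℕ → Fin 2, ∃ a : ℕ → Fin 2,
      (∀ t, 1 ≤ t → t ≤ 4 * τ →
        (∀ u b v, p t u b v = 0 ∨ p t u b v = 1) ∧
          (∀ u b, ∑ v, p t u b v = 1) ∧ diam (p t) = 1) ∧
      (∑ t ∈ Finset.Icc 1 (4 * τ - 1),
          ⨆ u : Fin 2, ⨆ b : Fin 2, ∑ v, |p (t + 1) u b v - p t u b v|) ≤ 6 ∧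
      (∀ q, 1 ≤ q → q ≤ 4 * τ → p q (s q) (a q) (s (q + 1)) = 1) ∧
      diam (empK (4 * τ) s a) = (τ : ℝ≥0∞) + 1 := by
  refine ⟨kernelSeq τ, trajState τ, trajAction τ,
    fun t _ _ => ⟨addKernel_eq_zero_or_eq_one _, sum_addKernel _, diam_addKernel _⟩,
    ?_, fun q _ hq => kernelSeq_trajectory hτ hq, diam_empK_trajectory hτ⟩
  calc _ ≤ 2 * (#{τ} : ℝ) := sum_variation_le (kernelSeq τ) (fun _ => addKernel_nonneg _)
        (fun _ => sum_addKernel _) _ _ fun t ht => kernelSeq_succ (by simpa using ht)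
    _ ≤ 6 := by norm_num
end

section
/- Let $D \ge 0$ and suppose for every state-action pair $(s,a)$: $|r'(s,a) - r(s,a)| \le \epsilon_r$ and $\|p'(\cdot|s,a) - p(\cdot|s,a)\|_1 \le \epsilon_p$, with $r(s,a), r'(s,a) \in [0,1]$. If $(\rho, \gamma)$ is feasible for the dual LP constraints $\rho + \gamma(s) \ge r(s,a) + \sum_{s'} p(s'|s,a)\gamma(s')$ for all $(s,a)$, and $0 \le \gamma(s) \le 2D$ for all $s$, then $(\rho + \epsilon_r + 2D\epsilon_p, \gamma)$ is feasible for the dual LP constraints with reward $r'$ and transition kernel $p'$. Consequently, the optimal average reward satisfies $\rho^*(r', p') \le \rho^*(r, p) + \epsilon_r + 2D\epsilon_p$ whenever the dual optimum of $(r,p)$ admits a bias vector with values in $[0, 2D]$. -/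
open Finset

/-- Feasibility for the dual LP of an average-reward MDP. -/
def DualFeas {S : Type*} [Fintype S] {A : S → Type*} [∀ s, Fintype (A s)]
    (r : (s : S) → A s → ℝ) (p : (s : S) → A s → S → ℝ) (ρ : ℝ) (γ : S → ℝ) : Prop :=
  ∀ s a, r s a + ∑ s', p s a s' * γ s' ≤ ρ + γ s

/-- Optimal value of the dual LP. -/
noncomputable def dualVal {S : Type*} [Fintype S] {A : S → Type*} [∀ s, Fintype (A s)]
    (r : (s : S) → A s → ℝ) (p : (s : S) → A s → S → ℝ) : ℝ :=
  sInf {ρ | ∃ γ : S → ℝ, DualFeas r p ρ γ}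

/-- If rewards are nonnegative, any negative feasible value forces the feasible set to be
unbounded below (by scaling the bias vector). -/
lemma dualFeas_scale {S : Type*} [Fintype S] {A : S → Type*} [∀ s, Fintype (A s)]
    (r : (s : S) → A s → ℝ) (p : (s : S) → A s → S → ℝ)
    (hr : ∀ s a, 0 ≤ r s a) {ρ : ℝ} {γ : S → ℝ} (hfeas : DualFeas r p ρ γ)
    (hρ : ρ < 0) {t : ℝ} (ht : 1 ≤ t) :
    DualFeas r p (t * ρ) (fun s => t * γ s) := by
  intro s a
  have h := hfeas s a
  have ht0 : 0 ≤ t := le_trans zero_le_one ht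
  have hsum : ∑ s', p s a s' * (t * γ s') = t * ∑ s', p s a s' * γ s' := by
    rw [Finset.mul_sum]; apply Finset.sum_congr rfl; intro i _; ring
  simp only [hsum]
  have h1 : ∑ s', p s a s' * γ s' - γ s ≤ ρ - r s a := by linarith
  have h2 : t * (∑ s', p s a s' * γ s' - γ s) ≤ t * (ρ - r s a) :=
    mul_le_mul_of_nonneg_left h1 ht0
  have h3 : r s a * (1 - t) ≤ 0 :=
    mul_nonpos_of_nonneg_of_nonpos (hr s a) (by linarith)
  nlinarith [h2, h3]

/-- With nonnegative rewards, the dual LP optimal value is nonnegative. -/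
lemma dualVal_nonneg {S : Type*} [Fintype S] {A : S → Type*} [∀ s, Fintype (A s)]
    (r : (s : S) → A s → ℝ) (p : (s : S) → A s → S → ℝ)
    (hr : ∀ s a, 0 ≤ r s a) : 0 ≤ dualVal r p := by
  unfold dualVal
  by_cases hb : BddBelow {ρ | ∃ γ : S → ℝ, DualFeas r p ρ γ}
  · apply Real.sInf_nonneg
    intro ρ hρ
    by_contra hneg
    push_neg at hneg
    obtain ⟨γ, hγ⟩ := hρ
    obtain ⟨b, hbb⟩ := hb
    -- choose t ≥ 1 with t * ρ < b
    set t : ℝ := max 1 ((b - 1) / ρ) with htdef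
    have ht1 : 1 ≤ t := le_max_left _ _
    have htρ : t * ρ ≤ b - 1 := by
      have h2 : (b - 1) / ρ ≤ t := le_max_right _ _
      have := mul_le_mul_of_nonpos_right h2 (le_of_lt hneg)
      calc t * ρ ≤ (b - 1) / ρ * ρ := by nlinarith
        _ = b - 1 := div_mul_cancel₀ _ (ne_of_lt hneg)
    have hmem : t * ρ ∈ {ρ | ∃ γ : S → ℝ, DualFeas r p ρ γ} :=
      ⟨fun s => t * γ s, dualFeas_scale r p hr hγ hneg ht1⟩
    have := hbb hmem
    linarith
  · rw [Real.sInf_of_not_bddBelow hb]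

/-- Perturbation bound for average-reward MDP dual LPs: shifting a feasible dual solution
by `ε_r + 2D ε_p` preserves feasibility under reward/transition perturbations, and hence
the optimal average reward is perturbed by at most `ε_r + 2D ε_p`. -/
theorem dual_lp_perturbation
    {S : Type*} [Fintype S] {A : S → Type*} [∀ s, Fintype (A s)]
    (D εr εp : ℝ) (hD : 0 ≤ D) (hεr : 0 ≤ εr) (hεp : 0 ≤ εp)
    (r r' : (s : S) → A s → ℝ) (p p' : (s : S) → A s → S → ℝ)
    (hr01 : ∀ s a, 0 ≤ r s a ∧ r s a ≤ 1) (hr'01 : ∀ s a, 0 ≤ r' s a ∧ r' s a ≤ 1)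
    (hrr' : ∀ s a, |r' s a - r s a| ≤ εr)
    (hpp' : ∀ s a, ∑ s', |p' s a s' - p s a s'| ≤ εp) :
    (∀ ρ (γ : S → ℝ), DualFeas r p ρ γ → (∀ s, 0 ≤ γ s ∧ γ s ≤ 2 * D) →
        DualFeas r' p' (ρ + εr + 2 * D * εp) γ) ∧
      ((∃ γ : S → ℝ, (∀ s, 0 ≤ γ s ∧ γ s ≤ 2 * D) ∧ DualFeas r p (dualVal r p) γ) →
        dualVal r' p' ≤ dualVal r p + εr + 2 * D * εp) := by
  have part1 : ∀ ρ (γ : S → ℝ), DualFeas r p ρ γ → (∀ s, 0 ≤ γ s ∧ γ s ≤ 2 * D) →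
      DualFeas r' p' (ρ + εr + 2 * D * εp) γ := by
    intro ρ γ hfeas hγ s a
    have hfsa := hfeas s a
    have hravg : r' s a - r s a ≤ εr := le_trans (le_abs_self _) (hrr' s a)
    have hsum : ∑ s', p' s a s' * γ s' - ∑ s', p s a s' * γ s' ≤ 2 * D * εp := by
      have heq : ∑ s', p' s a s' * γ s' - ∑ s', p s a s' * γ s'
          = ∑ s', (p' s a s' - p s a s') * γ s' := by
        rw [← Finset.sum_sub_distrib]
        apply Finset.sum_congr rfl; intro i _; ring
      rw [heq]
      calc ∑ s', (p' s a s' - p s a s') * γ s'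
          ≤ ∑ s', |p' s a s' - p s a s'| * (2 * D) := by
            apply Finset.sum_le_sum
            intro i _
            calc (p' s a i - p s a i) * γ i
                ≤ |p' s a i - p s a i| * γ i :=
                  mul_le_mul_of_nonneg_right (le_abs_self _) (hγ i).1
              _ ≤ |p' s a i - p s a i| * (2 * D) :=
                  mul_le_mul_of_nonneg_left (hγ i).2 (abs_nonneg _)
        _ = (∑ s', |p' s a s' - p s a s'|) * (2 * D) := by
            rw [Finset.sum_mul]
        _ ≤ εp * (2 * D) := by
            apply mul_le_mul_of_nonneg_right (hpp' s a); linarith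
        _ = 2 * D * εp := by ring
    linarith
  refine ⟨part1, ?_⟩
  rintro ⟨γ, hγ, hfeas⟩
  have hmem : dualVal r p + εr + 2 * D * εp ∈ {ρ | ∃ γ : S → ℝ, DualFeas r' p' ρ γ} :=
    ⟨γ, part1 _ γ hfeas hγ⟩
  by_cases hb : BddBelow {ρ | ∃ γ : S → ℝ, DualFeas r' p' ρ γ}
  · exact csInf_le hb hmem
  · have h0 : dualVal r' p' = 0 := Real.sInf_of_not_bddBelow hb
    have hnn : 0 ≤ dualVal r p := dualVal_nonneg r p (fun s a => (hr01 s a).1)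
    rw [h0]
    nlinarith
end

section
/- Let $W \ge 1$ and let $Q \subseteq \{1,\dots,T\}$ with the property that any two distinct elements of $Q$ differ by more than $W$. Let $\tilde Q \supseteq Q$ consist of all $m \in \{1,\dots,T\}$ such that $m - m' \in [0, W]$ for some $m' \in Q$. Suppose $\{1,\dots,T\}$ is partitioned into intervals (episodes), each of length at most $W$, each indexed by its start point. Then the total length of all episodes whose start points lie in $\tilde Q$ is at most $2W|Q|$. -/
open Finset

/-- Lemma `Q_error` (combinatorial core): episodes of length at most `W` whose start
points lie within `W` of some element of a `W`-separated set `Q` cover at most `2W|Q|`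
time steps in total. -/
theorem bad_episode_total_length_bound
    (T W M : ℕ) (hW : 1 ≤ W)
    (Q : Finset ℕ) (hQT : ∀ m ∈ Q, 1 ≤ m ∧ m ≤ T)
    (hsep : ∀ m ∈ Q, ∀ m' ∈ Q, m < m' → W < m' - m)
    (τ : ℕ → ℕ) (hτ1 : τ 1 = 1) (hτM : τ (M + 1) = T + 1)
    (hmono : ∀ m, 1 ≤ m → m ≤ M → τ m < τ (m + 1))
    (hlen : ∀ m, 1 ≤ m → m ≤ M → τ (m + 1) - τ m ≤ W) :
    ∑ m ∈ (Finset.Icc 1 M).filter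
        (fun m => ∃ m' ∈ Q, m' ≤ τ m ∧ τ m ≤ m' + W), (τ (m + 1) - τ m) ≤
      2 * W * Q.card := by
  classical
  have mono' : ∀ a b, 1 ≤ a → a ≤ b → b ≤ M + 1 → τ a ≤ τ b := by
    intro a b ha hab hbM
    induction b with
    | zero => omega
    | succ n ih =>
      rcases Nat.lt_or_ge a (n + 1) with h | h
      · have h1 : 1 ≤ n := by omega
        have h2 := hmono n h1 (by omega)
        have h3 := ih (by omega) (by omega)
        omega
      · have : a = n + 1 := by omega
        subst this; exact le_refl _
  set P := (Finset.Icc 1 M).filter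
      (fun m => ∃ m' ∈ Q, m' ≤ τ m ∧ τ m ≤ m' + W) with hP
  have hPeq : P = Q.biUnion (fun q => P.filter (fun m => q ≤ τ m ∧ τ m ≤ q + W)) := by
    ext m
    simp only [hP, Finset.mem_biUnion, Finset.mem_filter, Finset.mem_Icc]
    constructor
    · rintro ⟨hm, q, hq, h1, h2⟩
      exact ⟨q, hq, ⟨hm, q, hq, h1, h2⟩, h1, h2⟩
    · rintro ⟨q, hq, ⟨hm, _⟩, h1, h2⟩
      exact ⟨hm, q, hq, h1, h2⟩
  have hdisj : ∀ q ∈ Q, ∀ q' ∈ Q, q ≠ q' →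
      Disjoint (P.filter (fun m => q ≤ τ m ∧ τ m ≤ q + W))
               (P.filter (fun m => q' ≤ τ m ∧ τ m ≤ q' + W)) := by
    intro q hq q' hq' hne
    rw [Finset.disjoint_left]
    intro m hm hm'
    simp only [Finset.mem_filter] at hm hm'
    rcases Nat.lt_or_ge q q' with h | h
    · have := hsep q hq q' hq' h; omega
    · have h2 : q' < q := by omega
      have := hsep q' hq' q hq h2; omega
  have key : ∀ q ∈ Q,
      ∑ m ∈ P.filter (fun m => q ≤ τ m ∧ τ m ≤ q + W), (τ (m + 1) - τ m) ≤ 2 * W := by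
    intro q hq
    set S := P.filter (fun m => q ≤ τ m ∧ τ m ≤ q + W) with hS
    have hSmem : ∀ m ∈ S, 1 ≤ m ∧ m ≤ M ∧ q ≤ τ m ∧ τ m ≤ q + W := by
      intro m hm
      simp only [hS, hP, Finset.mem_filter, Finset.mem_Icc] at hm
      tauto
    have hd : ∀ a ∈ S, ∀ b ∈ S, a ≠ b →
        Disjoint (Finset.Ico (τ a) (τ (a + 1))) (Finset.Ico (τ b) (τ (b + 1))) := by
      intro a ha b hb hab
      obtain ⟨ha1, haM, _⟩ := hSmem a ha
      obtain ⟨hb1, hbM, _⟩ := hSmem b hb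
      rw [Finset.disjoint_left]
      intro x hx hx'
      simp only [Finset.mem_Ico] at hx hx'
      rcases Nat.lt_or_ge a b with h | h
      · have := mono' (a + 1) b (by omega) (by omega) (by omega); omega
      · have hba : b < a := by omega
        have := mono' (b + 1) a (by omega) (by omega) (by omega); omega
    have h1 : ∑ m ∈ S, (τ (m + 1) - τ m)
        = ∑ m ∈ S, (Finset.Ico (τ m) (τ (m + 1))).card := by
      refine Finset.sum_congr rfl fun m hm => ?_
      rw [Nat.card_Ico]
    rw [h1, ← Finset.card_biUnion hd]
    have hsub : S.biUnion (fun m => Finset.Ico (τ m) (τ (m + 1)))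
        ⊆ Finset.Ico q (q + 2 * W) := by
      intro x hx
      simp only [Finset.mem_biUnion, Finset.mem_Ico] at hx ⊢
      obtain ⟨m, hm, hx1, hx2⟩ := hx
      obtain ⟨hm1, hmM, hq1, hq2⟩ := hSmem m hm
      have := hlen m hm1 hmM
      omega
    calc (S.biUnion (fun m => Finset.Ico (τ m) (τ (m + 1)))).card
        ≤ (Finset.Ico q (q + 2 * W)).card := Finset.card_le_card hsub
      _ = 2 * W := by rw [Nat.card_Ico]; omega
  calc ∑ m ∈ P, (τ (m + 1) - τ m)
      = ∑ q ∈ Q, ∑ m ∈ P.filter (fun m => q ≤ τ m ∧ τ m ≤ q + W), (τ (m + 1) - τ m) := by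
        conv_lhs => rw [hPeq]
        exact Finset.sum_biUnion hdisj
    _ ≤ ∑ q ∈ Q, 2 * W := Finset.sum_le_sum key
    _ = 2 * W * Q.card := by rw [Finset.sum_const, smul_eq_mul, mul_comm]
end
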